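/- (Barenblatt solutions, degenerate case.) Let N ≥ 1, p > 2, M > 0 and set λ = N(p − 2) + p. There exist constants a, b > 0, depending only on N and p, such that the function B(x, t) := t^{−N/λ}·[ a·M^{p(p−2)/(λ(p−1))} − b·(‖x‖·t^{−1/λ})^{p/(p−1)} ]₊^{(p−1)/(p−2)} on ℝ^N × (0, ∞) satisfies: (i) at every point (x, t) with t > 0, x ≠ 0 and a·M^{p(p−2)/(λ(p−1))} − b·(‖x‖·t^{−1/λ})^{p/(p−1)} > 0, the identity ∂_t B(x, t) = div_x(‖∇_x B(x,t)‖^{p−2}·∇_x B(x,t)) holds pointwise (the spatial flux field being differentiable there); and (ii) for every bounded continuous φ : ℝ^N → ℝ, ∫_{ℝ^N} B(x, t)·φ(x) dx → M·φ(0) as t → 0⁺. -/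

import Mathlib

open MeasureTheory Filter Set

/-- The divergence of a vector field `F : ℝ^N → ℝ^N` at `x`: the trace of its Jacobian. -/
noncomputable def divergence {N : ℕ}
    (F : EuclideanSpace ℝ (Fin N) → EuclideanSpace ℝ (Fin N))
    (x : EuclideanSpace ℝ (Fin N)) : ℝ :=
  ∑ i, fderiv ℝ F x (EuclideanSpace.single i 1) i

/-- The `p`-Laplacian flux `‖∇f‖^{p-2} ∇f` of a scalar function `f : ℝ^N → ℝ`. -/
noncomputable def pFlux {N : ℕ} (p : ℝ) (f : EuclideanSpace ℝ (Fin N) → ℝ)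
    (y : EuclideanSpace ℝ (Fin N)) : EuclideanSpace ℝ (Fin N) :=
  ‖gradient f y‖ ^ (p - 2) • gradient f y

/-- The Barenblatt profile in the degenerate case `p > 2`, with parameters `a, b, M`
and `λ = N(p-2) + p`. -/
noncomputable def barenblattDeg (N : ℕ) (p a b M : ℝ)
    (x : EuclideanSpace ℝ (Fin N)) (t : ℝ) : ℝ :=
  t ^ (-(N : ℝ) / ((N : ℝ) * (p - 2) + p)) *
    (max (a * M ^ (p * (p - 2) / (((N : ℝ) * (p - 2) + p) * (p - 1))) -
        b * (‖x‖ * t ^ ((-1 : ℝ) / ((N : ℝ) * (p - 2) + p))) ^ (p / (p - 1))) 0) ^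
      ((p - 1) / (p - 2))

open InnerProductSpace
open scoped ENNReal

section BarenblattAux

variable {N : ℕ}

lemma gradient_of_inner_fderiv {f : EuclideanSpace ℝ (Fin N) → ℝ} {z : EuclideanSpace ℝ (Fin N)}
    {c : ℝ} (h : HasFDerivAt f (c • (innerSL ℝ z)) z) : gradient f z = c • z := by
  have h2 : HasGradientAt f (c • z) z := by
    rw [hasGradientAt_iff_hasFDerivAt]
    convert h using 1
    ext y
    simp [toDual_apply_apply, real_inner_smul_left]
    · rfl
    · ext y
      simp [toDual_apply_apply, real_inner_smul_left]
  exact h2.gradient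

lemma continuous_profile (C b q m : ℝ) (hq : 0 ≤ q) (hm : 0 ≤ m) :
    Continuous (fun y : EuclideanSpace ℝ (Fin N) => (max (C - b * ‖y‖ ^ q) 0) ^ m) := by
  have h1 : Continuous (fun y : EuclideanSpace ℝ (Fin N) => ‖y‖ ^ q) := by
    rw [continuous_iff_continuousAt]
    exact fun z => (Real.continuousAt_rpow_const _ _ (Or.inr hq)).comp continuous_norm.continuousAt
  have h2 : Continuous (fun y : EuclideanSpace ℝ (Fin N) => max (C - b * ‖y‖ ^ q) 0) :=
    (continuous_const.sub (continuous_const.mul h1)).max continuous_const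
  rw [continuous_iff_continuousAt]
  exact fun z => (Real.continuousAt_rpow_const _ _ (Or.inr hm)).comp h2.continuousAt

lemma hcs_profile (C b q m : ℝ) (hC : 0 < C) (hb : 0 < b) (hq : 0 < q) (hm : 0 < m) :
    HasCompactSupport (fun y : EuclideanSpace ℝ (Fin N) => (max (C - b * ‖y‖ ^ q) 0) ^ m) := by
  apply HasCompactSupport.intro (isCompact_closedBall (0 : EuclideanSpace ℝ (Fin N)) ((C/b) ^ (1/q)))
  intro y hy
  simp only [Metric.mem_closedBall, dist_zero_right, not_le] at hy
  have hR : (0:ℝ) ≤ (C/b) ^ (1/q) := Real.rpow_nonneg (by positivity) _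
  have h1 : ((C/b) ^ (1/q) : ℝ) ^ q < ‖y‖ ^ q := Real.rpow_lt_rpow hR hy hq
  rw [one_div, Real.rpow_inv_rpow (by positivity) hq.ne'] at h1
  have h2 : C - b * ‖y‖ ^ q < 0 := by
    have := (div_lt_iff₀ hb).mp h1
    linarith [mul_comm (‖y‖ ^ q) b]
  rw [max_eq_right h2.le, Real.zero_rpow hm.ne']

lemma nonneg_profile (C b q m : ℝ) (y : EuclideanSpace ℝ (Fin N)) :
    0 ≤ (max (C - b * ‖y‖ ^ q) 0) ^ m := Real.rpow_nonneg (le_max_right _ _) _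

variable {N : ℕ}

-- scaling: ∫ (max (C - b‖y‖^q) 0)^m = C^(m + N/q) * ∫ (max (1 - b‖y‖^q) 0)^m
lemma mass_scale (C b q m : ℝ) (hC : 0 < C) (hb : 0 < b) (hq : 0 < q) (hm : 0 < m) :
    ∫ y : EuclideanSpace ℝ (Fin N), (max (C - b * ‖y‖ ^ q) 0) ^ m
      = C ^ (m + (N:ℝ)/q) * ∫ y : EuclideanSpace ℝ (Fin N), (max (1 - b * ‖y‖ ^ q) 0) ^ m := by
  set s : ℝ := C ^ (1/q) with hsdef
  have hs : 0 < s := Real.rpow_pos_of_pos hC _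
  have key : ∀ y : EuclideanSpace ℝ (Fin N),
      (max (C - b * ‖s • y‖ ^ q) 0) ^ m = C ^ m * (max (1 - b * ‖y‖ ^ q) 0) ^ m := by
    intro y
    have h1 : ‖s • y‖ ^ q = C * ‖y‖ ^ q := by
      rw [norm_smul, Real.norm_eq_abs, abs_of_pos hs, Real.mul_rpow hs.le (norm_nonneg _),
        hsdef, one_div, Real.rpow_inv_rpow hC.le hq.ne']
    rw [h1, ← Real.mul_rpow hC.le (le_max_right _ _)]
    congr 1
    rw [mul_max_of_nonneg _ _ hC.le, mul_zero]
    ring_nf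
  have hint := Measure.integral_comp_smul (volume : Measure (EuclideanSpace ℝ (Fin N)))
      (fun y => (max (C - b * ‖y‖ ^ q) 0) ^ m) s
  simp only [key] at hint
  rw [integral_const_mul, finrank_euclideanSpace_fin] at hint
  -- hint : C^m * ∫ G₁ = |(s^N)⁻¹| • ∫ GC
  have hsN : (0:ℝ) < s ^ N := pow_pos hs N
  rw [abs_of_pos (by positivity), smul_eq_mul] at hint
  have h2 : s ^ N = C ^ ((N:ℝ)/q) := by
    rw [hsdef, ← Real.rpow_natCast (C ^ (1/q)) N, ← Real.rpow_mul hC.le]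
    congr 1
    field_simp
  have h3 : ∫ y : EuclideanSpace ℝ (Fin N), (max (C - b * ‖y‖ ^ q) 0) ^ m
      = s ^ N * (C ^ m * ∫ y : EuclideanSpace ℝ (Fin N), (max (1 - b * ‖y‖ ^ q) 0) ^ m) := by
    rw [hint, ← mul_assoc, mul_inv_cancel₀ hsN.ne', one_mul]
  rw [h3, h2, Real.rpow_add hC]
  ring

-- positivity of the base integral
lemma J_pos (b q m : ℝ) (hb : 0 < b) (hq : 0 < q) (hm : 0 < m) :
    0 < ∫ y : EuclideanSpace ℝ (Fin N), (max (1 - b * ‖y‖ ^ q) 0) ^ m := by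
  have hcont := continuous_profile (N := N) 1 b q m hq.le hm.le
  have hint : Integrable (fun y : EuclideanSpace ℝ (Fin N) => (max (1 - b * ‖y‖ ^ q) 0) ^ m) :=
    hcont.integrable_of_hasCompactSupport (hcs_profile 1 b q m one_pos hb hq hm)
  rw [integral_pos_iff_support_of_nonneg (fun y => nonneg_profile 1 b q m y) hint]
  set r : ℝ := (1 / (2 * b)) ^ q⁻¹ with hrdef
  have hr : 0 < r := Real.rpow_pos_of_pos (by positivity) _
  have hsub : Metric.ball (0 : EuclideanSpace ℝ (Fin N)) r ⊆
      Function.support (fun y => (max (1 - b * ‖y‖ ^ q) 0) ^ m) := by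
    intro y hy
    simp only [Metric.mem_ball, dist_zero_right] at hy
    have h1 : ‖y‖ ^ q < r ^ q := by
      rcases eq_or_ne y 0 with rfl | hy0
      · simp only [norm_zero]
        rw [Real.zero_rpow hq.ne']
        exact Real.rpow_pos_of_pos hr _
      · exact Real.rpow_lt_rpow (norm_nonneg _) hy hq
    rw [hrdef, Real.rpow_inv_rpow (by positivity) hq.ne'] at h1
    have h2 : b * ‖y‖ ^ q < 1/2 := by
      have h4 := mul_lt_mul_of_pos_left h1 hb
      have h5 : b * (1/(2*b)) = 1/2 := by field_simp
      linarith
    have h3 : 0 < 1 - b * ‖y‖ ^ q := by linarith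
    have : (0:ℝ) < (max (1 - b * ‖y‖ ^ q) 0) ^ m :=
      Real.rpow_pos_of_pos (lt_max_iff.mpr (Or.inl h3)) _
    exact this.ne'
  calc (0 : ℝ≥0∞) < volume (Metric.ball (0 : EuclideanSpace ℝ (Fin N)) r) :=
        Metric.measure_ball_pos _ _ hr
    _ ≤ _ := measure_mono hsub
lemma part_two (N : ℕ) (L q m b C M : ℝ) (hL : 0 < L) (hq : 0 < q) (hm : 0 < m)
    (hb : 0 < b) (hC : 0 < C)
    (hmass : ∫ y : EuclideanSpace ℝ (Fin N), (max (C - b * ‖y‖ ^ q) 0) ^ m = M)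
    (φ : EuclideanSpace ℝ (Fin N) → ℝ) (hφ : Continuous φ) (K : ℝ) (hK : ∀ x, |φ x| ≤ K) :
    Tendsto (fun t : ℝ => ∫ x : EuclideanSpace ℝ (Fin N),
        (t ^ (-(N:ℝ)/L) * (max (C - b * (‖x‖ * t ^ ((-1:ℝ)/L)) ^ q) 0) ^ m) * φ x)
      (nhdsWithin 0 (Ioi (0:ℝ))) (nhds (M * φ 0)) := by
  set Gc : EuclideanSpace ℝ (Fin N) → ℝ := fun y => (max (C - b * ‖y‖ ^ q) 0) ^ m with hGcdef
  have hGcont : Continuous Gc := continuous_profile C b q m hq.le hm.le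
  have hGint : Integrable Gc := hGcont.integrable_of_hasCompactSupport
    (hcs_profile C b q m hC hb hq hm)
  have hGnn : ∀ y, 0 ≤ Gc y := fun y => nonneg_profile C b q m y
  -- step 1 : substitution
  have step1 : ∀ t ∈ Ioi (0:ℝ), ∫ x : EuclideanSpace ℝ (Fin N),
      (t ^ (-(N:ℝ)/L) * (max (C - b * (‖x‖ * t ^ ((-1:ℝ)/L)) ^ q) 0) ^ m) * φ x
      = ∫ y : EuclideanSpace ℝ (Fin N), Gc y * φ (t ^ ((1:ℝ)/L) • y) := by
    intro t ht
    rw [mem_Ioi] at ht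
    set c : ℝ := t ^ ((-1:ℝ)/L) with hcdef
    have hc : 0 < c := Real.rpow_pos_of_pos ht _
    have hcinv : c⁻¹ = t ^ ((1:ℝ)/L) := by
      rw [hcdef, show ((-1:ℝ)/L) = -((1:ℝ)/L) by ring, Real.rpow_neg ht.le, inv_inv]
    have hrep : ∀ x : EuclideanSpace ℝ (Fin N),
        (max (C - b * (‖x‖ * c) ^ q) 0) ^ m = Gc (c • x) := by
      intro x
      simp only [hGcdef, norm_smul, Real.norm_eq_abs, abs_of_pos hc, mul_comm]
    set f : EuclideanSpace ℝ (Fin N) → ℝ := fun y => Gc y * φ (c⁻¹ • y) with hfdef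
    have hfc : ∀ x, f (c • x) = Gc (c • x) * φ x := by
      intro x
      simp only [hfdef, smul_smul, inv_mul_cancel₀ hc.ne', one_smul]
    have e1 : ∀ x : EuclideanSpace ℝ (Fin N),
        (t ^ (-(N:ℝ)/L) * (max (C - b * (‖x‖ * c) ^ q) 0) ^ m) * φ x
        = t ^ (-(N:ℝ)/L) * f (c • x) := by
      intro x
      rw [hfc, hrep]
      ring
    simp only [e1]
    rw [integral_const_mul, Measure.integral_comp_smul volume f c, finrank_euclideanSpace_fin]
    have hcN : (0:ℝ) < c ^ N := pow_pos hc N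
    rw [abs_of_pos (by positivity), smul_eq_mul, ← mul_assoc]
    have hfin : t ^ (-(N:ℝ)/L) * (c ^ N)⁻¹ = 1 := by
      rw [hcdef, ← Real.rpow_natCast (t ^ ((-1:ℝ)/L)) N, ← Real.rpow_mul ht.le]
      rw [← Real.rpow_neg ht.le, ← Real.rpow_add ht]
      rw [show (-(N:ℝ)/L + -((-1:ℝ)/L * (N:ℝ))) = 0 by ring, Real.rpow_zero]
    rw [hfin, one_mul, hfdef]
    simp only [hcinv]
  -- step 2 : dominated convergence
  have step2 : Tendsto (fun t : ℝ => ∫ y : EuclideanSpace ℝ (Fin N), Gc y * φ (t ^ ((1:ℝ)/L) • y))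
      (nhdsWithin 0 (Ioi (0:ℝ))) (nhds (M * φ 0)) := by
    have hlim : ∫ y : EuclideanSpace ℝ (Fin N), Gc y * φ 0 = M * φ 0 := by
      rw [integral_mul_const, hmass]
    rw [← hlim]
    apply tendsto_integral_filter_of_dominated_convergence (fun y => Gc y * K)
    · filter_upwards with t
      exact (hGcont.mul (hφ.comp (continuous_const_smul (t ^ ((1:ℝ)/L)) :
          Continuous fun a : EuclideanSpace ℝ (Fin N) => t ^ ((1:ℝ)/L) • a)) :
        Continuous fun a => Gc a * φ (t ^ ((1:ℝ)/L) • a)).aestronglyMeasurable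
    · filter_upwards with t
      filter_upwards with y
      rw [Real.norm_eq_abs, abs_mul, abs_of_nonneg (hGnn y)]
      exact mul_le_mul_of_nonneg_left (hK _) (hGnn y)
    · exact hGint.mul_const K
    · filter_upwards with y
      apply Tendsto.const_mul
      have h1 : Tendsto (fun t : ℝ => t ^ ((1:ℝ)/L)) (nhdsWithin 0 (Ioi (0:ℝ))) (nhds 0) := by
        have := (Real.continuousAt_rpow_const 0 ((1:ℝ)/L) (Or.inr (by positivity))).tendsto
        rw [Real.zero_rpow (by positivity)] at this
        exact this.mono_left nhdsWithin_le_nhds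
      have h2 : Tendsto (fun s : ℝ => φ (s • y)) (nhds 0) (nhds (φ 0)) := by
        have : Continuous (fun s : ℝ => φ (s • y)) :=
          hφ.comp (continuous_id.smul continuous_const)
        have h3 := this.tendsto 0
        rw [zero_smul] at h3
        exact h3
      exact h2.comp h1
  apply step2.congr'
  filter_upwards [self_mem_nhdsWithin] with t ht
  exact (step1 t ht).symm

-- scalar identity for the flux
lemma flux_scalar (p m q A W r : ℝ) (hp : 2 < p) (hmdef : m = (p-1)/(p-2))
    (hqdef : q = p/(p-1)) (hA : 0 < A) (hW : 0 < W) (hr : 0 < r) :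
    ((A * W ^ (m-1) * ((r^2 : ℝ)) ^ (q/2-1)) * r) ^ (p-2) *
      (-(A * W ^ (m-1) * ((r^2 : ℝ)) ^ (q/2-1))) = -(A ^ (p-1)) * W ^ m := by
  have hp1 : (0:ℝ) < p - 1 := by linarith
  have hp2 : (0:ℝ) < p - 2 := by linarith
  have hY : ((r^2 : ℝ)) ^ (q/2-1) = r ^ (q-2) := by
    rw [← Real.rpow_natCast r 2, ← Real.rpow_mul hr.le]
    congr 1
    ring
  have hrr : r ^ (q-2) * r = r ^ (q-1) := by
    nth_rewrite 2 [← Real.rpow_one r]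
    rw [← Real.rpow_add hr]
    congr 1
    ring
  rw [hY, mul_assoc (A * W ^ (m-1)), hrr]
  have hWnn : (0:ℝ) ≤ W ^ (m-1) := Real.rpow_nonneg hW.le _
  have hrnn : (0:ℝ) ≤ r ^ (q-1) := Real.rpow_nonneg hr.le _
  rw [Real.mul_rpow (by positivity) hrnn, Real.mul_rpow hA.le hWnn,
    ← Real.rpow_mul hW.le, ← Real.rpow_mul hr.le]
  have hA2 : A ^ (p-2) * A = A ^ (p-1) := by
    nth_rewrite 2 [← Real.rpow_one A]
    rw [← Real.rpow_add hA]
    congr 1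
    ring
  have hW2 : W ^ ((m-1)*(p-2)) * W ^ (m-1) = W ^ m := by
    rw [← Real.rpow_add hW]
    congr 1
    rw [hmdef]
    field_simp
    ring
  have hr2 : r ^ ((q-1)*(p-2)) * r ^ (q-2) = 1 := by
    rw [← Real.rpow_add hr]
    rw [show (q-1)*(p-2) + (q-2) = 0 by rw [hqdef]; field_simp; ring]
    exact Real.rpow_zero r
  calc A ^ (p-2) * W ^ ((m-1)*(p-2)) * r ^ ((q-1)*(p-2)) *
        (-(A * W ^ (m-1) * r ^ (q-2)))
      = -((A ^ (p-2) * A) * (W ^ ((m-1)*(p-2)) * W ^ (m-1)) *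
          (r ^ ((q-1)*(p-2)) * r ^ (q-2))) := by ring
    _ = -(A ^ (p-1)) * W ^ m := by rw [hA2, hW2, hr2]; ring

lemma part_one (N : ℕ) (p L q m b C : ℝ) (hp : 2 < p)
    (hLdef : L = (N:ℝ)*(p-2)+p) (hqdef : q = p/(p-1)) (hmdef : m = (p-1)/(p-2))
    (hbdef : b = (p-2)/p * L ^ (-(1:ℝ)/(p-1))) (hC : 0 < C)
    (x : EuclideanSpace ℝ (Fin N)) (t : ℝ) (ht : 0 < t) (hx : x ≠ 0)
    (hpos : 0 < C - b * (‖x‖ * t ^ ((-1:ℝ)/L)) ^ q) :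
    DifferentiableAt ℝ (pFlux p (fun z : EuclideanSpace ℝ (Fin N) =>
        t ^ (-(N:ℝ)/L) * (max (C - b * (‖z‖ * t ^ ((-1:ℝ)/L)) ^ q) 0) ^ m)) x ∧
      deriv (fun s : ℝ => s ^ (-(N:ℝ)/L) * (max (C - b * (‖x‖ * s ^ ((-1:ℝ)/L)) ^ q) 0) ^ m) t =
        divergence (pFlux p (fun z : EuclideanSpace ℝ (Fin N) =>
          t ^ (-(N:ℝ)/L) * (max (C - b * (‖z‖ * t ^ ((-1:ℝ)/L)) ^ q) 0) ^ m)) x := by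
  have hp0 : (0:ℝ) < p := by linarith
  have hp1 : (0:ℝ) < p - 1 := by linarith
  have hp2 : (0:ℝ) < p - 2 := by linarith
  have hL : 0 < L := by
    have : (0:ℝ) ≤ (N:ℝ)*(p-2) := mul_nonneg (Nat.cast_nonneg N) hp2.le
    rw [hLdef]; linarith
  have hq : 0 < q := by rw [hqdef]; positivity
  have hm : 0 < m := by rw [hmdef]; positivity
  have hb : 0 < b := by
    rw [hbdef]
    exact mul_pos (by positivity) (Real.rpow_pos_of_pos hL _)
  set T : ℝ := (t ^ ((-1:ℝ)/L)) ^ q with hTdef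
  have hT : 0 < T := Real.rpow_pos_of_pos (Real.rpow_pos_of_pos ht _) _
  set w : ℝ → ℝ := fun u => C - b * (u ^ (q/2) * T) with hwdef
  set Bfun : EuclideanSpace ℝ (Fin N) → ℝ := fun z =>
    t ^ (-(N:ℝ)/L) * (max (C - b * (‖z‖ * t ^ ((-1:ℝ)/L)) ^ q) 0) ^ m with hBdef
  have key₁ : ∀ z : EuclideanSpace ℝ (Fin N),
      (‖z‖ * t ^ ((-1:ℝ)/L)) ^ q = ((‖z‖^2 : ℝ)) ^ (q/2) * T := by
    intro z
    rw [Real.mul_rpow (norm_nonneg z) (Real.rpow_nonneg ht.le _)]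
    congr 1
    rw [← Real.rpow_natCast ‖z‖ 2, ← Real.rpow_mul (norm_nonneg z)]
    congr 1
    ring
  have rep : ∀ z : EuclideanSpace ℝ (Fin N),
      Bfun z = t ^ (-(N:ℝ)/L) * (max (w (‖z‖^2)) 0) ^ m := by
    intro z
    simp only [hBdef, hwdef, key₁]
  have hwcont : Continuous w := by
    have h1 : Continuous (fun u : ℝ => u ^ (q/2)) := by
      rw [continuous_iff_continuousAt]
      exact fun u => Real.continuousAt_rpow_const _ _ (Or.inr (by positivity))
    exact continuous_const.sub (continuous_const.mul (h1.mul continuous_const))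
  have hsqc : Continuous (fun z : EuclideanSpace ℝ (Fin N) => (‖z‖^2 : ℝ)) :=
    continuous_norm.pow 2
  set U : Set (EuclideanSpace ℝ (Fin N)) :=
    {z | 0 < w (‖z‖^2)} ∩ {(0 : EuclideanSpace ℝ (Fin N))}ᶜ with hUdef
  have hUopen : IsOpen U :=
    (isOpen_lt continuous_const (hwcont.comp hsqc)).inter isOpen_compl_singleton
  have hxw : 0 < w (‖x‖^2) := by
    have h := hpos
    rw [key₁ x] at h
    exact h
  have hxU : x ∈ U := ⟨hxw, by simp [hx]⟩
  set A : ℝ := t ^ (-(N:ℝ)/L) * m * (b * T * q) with hAdef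
  have hA : 0 < A := by
    have := Real.rpow_pos_of_pos ht (-(N:ℝ)/L)
    positivity
  set g : ℝ → ℝ := fun u => -(A * (w u) ^ (m-1) * u ^ (q/2-1)) with hgdef
  set k : ℝ → ℝ := fun u => -(A ^ (p-1)) * (w u) ^ m with hkdef
  have hwderiv : ∀ u : ℝ, 0 < u → HasDerivAt w (-(b * (q/2 * u ^ (q/2-1) * T))) u := by
    intro u hu
    have h1 : HasDerivAt (fun v : ℝ => v ^ (q/2)) (q/2 * u ^ (q/2-1)) u :=
      Real.hasDerivAt_rpow_const (Or.inl hu.ne')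
    exact ((h1.mul_const T).const_mul b).const_sub C
  have hgrad : ∀ z ∈ U, gradient Bfun z = g (‖z‖^2) • z := by
    intro z hz
    have hz1 : 0 < w (‖z‖^2) := hz.1
    have hz2 : z ≠ 0 := by simpa using hz.2
    have hu : (0:ℝ) < ‖z‖^2 := by
      have : 0 < ‖z‖ := norm_pos_iff.mpr hz2
      positivity
    have hw' := hwderiv _ hu
    have hWm : HasDerivAt (fun u => (w u) ^ m)
        ((-(b * (q/2 * (‖z‖^2:ℝ) ^ (q/2-1) * T))) * m * (w (‖z‖^2)) ^ (m-1)) (‖z‖^2) :=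
      hw'.rpow_const (Or.inl hz1.ne')
    have hφ : HasDerivAt (fun u => t ^ (-(N:ℝ)/L) * (w u) ^ m)
        (t ^ (-(N:ℝ)/L) * ((-(b * (q/2 * (‖z‖^2:ℝ) ^ (q/2-1) * T))) * m * (w (‖z‖^2)) ^ (m-1)))
        (‖z‖^2) := hWm.const_mul _
    have hsq' : HasFDerivAt (fun z' : EuclideanSpace ℝ (Fin N) => (‖z'‖^2 : ℝ))
        (2 • innerSL ℝ z) z := (hasStrictFDerivAt_norm_sq z).hasFDerivAt
    have hcomp : HasFDerivAt (fun z' : EuclideanSpace ℝ (Fin N) =>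
        t ^ (-(N:ℝ)/L) * (w (‖z'‖^2)) ^ m)
        ((t ^ (-(N:ℝ)/L) * ((-(b * (q/2 * (‖z‖^2:ℝ) ^ (q/2-1) * T))) * m
          * (w (‖z‖^2)) ^ (m-1))) • (2 • innerSL ℝ z)) z :=
      hφ.comp_hasFDerivAt (h₂ := fun u => t ^ (-(N:ℝ)/L) * (w u) ^ m)
        (f := fun z' : EuclideanSpace ℝ (Fin N) => (‖z'‖^2 : ℝ)) z hsq'
    have hev : Bfun =ᶠ[nhds z] (fun z' : EuclideanSpace ℝ (Fin N) =>
        t ^ (-(N:ℝ)/L) * (w (‖z'‖^2)) ^ m) := by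
      filter_upwards [(isOpen_lt continuous_const (hwcont.comp hsqc)).mem_nhds hz1] with y hy
      have hy' : 0 < w (‖y‖^2) := hy
      rw [rep y, max_eq_left (le_of_lt hy')]
    have hBz : HasFDerivAt Bfun
        ((t ^ (-(N:ℝ)/L) * ((-(b * (q/2 * (‖z‖^2:ℝ) ^ (q/2-1) * T))) * m
          * (w (‖z‖^2)) ^ (m-1))) • (2 • innerSL ℝ z)) z :=
      hcomp.congr_of_eventuallyEq hev
    have hclm : ((t ^ (-(N:ℝ)/L) * ((-(b * (q/2 * (‖z‖^2:ℝ) ^ (q/2-1) * T))) * m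
          * (w (‖z‖^2)) ^ (m-1))) • (2 • innerSL ℝ z)) = g (‖z‖^2) • innerSL ℝ z := by
      ext y
      simp only [ContinuousLinearMap.smul_apply, ContinuousLinearMap.coe_smul',
        Pi.smul_apply, smul_eq_mul, nsmul_eq_mul, innerSL_apply_apply]
      simp only [hgdef, hAdef]
      push_cast
      ring
    rw [hclm] at hBz
    exact gradient_of_inner_fderiv hBz
  have hflux : ∀ z ∈ U, pFlux p Bfun z = k (‖z‖^2) • z := by
    intro z hz
    have hz1 : 0 < w (‖z‖^2) := hz.1
    have hz2 : z ≠ 0 := by simpa using hz.2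
    have hr : (0:ℝ) < ‖z‖ := norm_pos_iff.mpr hz2
    simp only [pFlux]
    rw [hgrad z hz, norm_smul, Real.norm_eq_abs, smul_smul]
    congr 1
    have habs : |g (‖z‖^2)| = A * (w (‖z‖^2)) ^ (m-1) * ((‖z‖^2:ℝ)) ^ (q/2-1) := by
      simp only [hgdef]
      rw [abs_neg, abs_of_nonneg]
      exact mul_nonneg (mul_nonneg hA.le (Real.rpow_nonneg hz1.le _))
        (Real.rpow_nonneg (by positivity) _)
    rw [habs]
    simp only [hgdef, hkdef]
    exact flux_scalar p m q A (w (‖z‖^2)) ‖z‖ hp hmdef hqdef hA hz1 hr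
  have hux : (0:ℝ) < ‖x‖^2 := by
    have : 0 < ‖x‖ := norm_pos_iff.mpr hx
    positivity
  have hkderiv : HasDerivAt k
      ((-(b * (q/2 * (‖x‖^2:ℝ) ^ (q/2-1) * T))) * m * (w (‖x‖^2)) ^ (m-1) * (-(A ^ (p-1))))
      (‖x‖^2) := by
    have hWmx : HasDerivAt (fun u => (w u) ^ m)
        ((-(b * (q/2 * (‖x‖^2:ℝ) ^ (q/2-1) * T))) * m * (w (‖x‖^2)) ^ (m-1)) (‖x‖^2) :=
      (hwderiv _ hux).rpow_const (Or.inl hxw.ne')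
    have h1 : HasDerivAt k
        (-(A ^ (p-1)) * ((-(b * (q/2 * (‖x‖^2:ℝ) ^ (q/2-1) * T))) * m
          * (w (‖x‖^2)) ^ (m-1))) (‖x‖^2) := by
      simp only [hkdef]
      exact hWmx.const_mul _
    convert h1 using 1
    ring
  have hsqx : HasFDerivAt (fun z' : EuclideanSpace ℝ (Fin N) => (‖z'‖^2 : ℝ))
      (2 • innerSL ℝ x) x := (hasStrictFDerivAt_norm_sq x).hasFDerivAt
  have hkF : HasFDerivAt (fun z : EuclideanSpace ℝ (Fin N) => k (‖z‖^2))
      (((-(b * (q/2 * (‖x‖^2:ℝ) ^ (q/2-1) * T))) * m * (w (‖x‖^2)) ^ (m-1) * (-(A ^ (p-1))))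
        • (2 • innerSL ℝ x)) x := hkderiv.comp_hasFDerivAt (h₂ := k)
          (f := fun z' : EuclideanSpace ℝ (Fin N) => (‖z'‖^2 : ℝ)) x hsqx
  set kd : ℝ := (-(b * (q/2 * (‖x‖^2:ℝ) ^ (q/2-1) * T))) * m * (w (‖x‖^2)) ^ (m-1)
    * (-(A ^ (p-1))) with hkddef
  have hFf : HasFDerivAt (fun z : EuclideanSpace ℝ (Fin N) => k (‖z‖^2) • z)
      (k (‖x‖^2) • ContinuousLinearMap.id ℝ (EuclideanSpace ℝ (Fin N))
        + (kd • (2 • innerSL ℝ x)).smulRight x) x :=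
    hkF.smul (hasFDerivAt_id x)
  have hEq : pFlux p Bfun =ᶠ[nhds x] (fun z : EuclideanSpace ℝ (Fin N) => k (‖z‖^2) • z) := by
    filter_upwards [hUopen.mem_nhds hxU] with y hy
    exact hflux y hy
  refine ⟨hFf.differentiableAt.congr_of_eventuallyEq hEq, ?_⟩
  have hdiv : divergence (pFlux p Bfun) x = N * k (‖x‖^2) + 2 * kd * (‖x‖^2) := by
    unfold divergence
    rw [hEq.fderiv_eq, hFf.fderiv]
    have happ : ∀ i : Fin N,
        ((k (‖x‖^2) • ContinuousLinearMap.id ℝ (EuclideanSpace ℝ (Fin N))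
          + (kd • (2 • innerSL ℝ x)).smulRight x) (EuclideanSpace.single i 1)) i
        = k (‖x‖^2) * (EuclideanSpace.single i (1:ℝ)) i + (kd * (2 * x i)) * x i := by
      intro i
      simp [ContinuousLinearMap.smulRight_apply, EuclideanSpace.inner_single_right]
    rw [Finset.sum_congr rfl (fun i _ => happ i), Finset.sum_add_distrib]
    have hs1 : ∑ i : Fin N, k (‖x‖^2) * (EuclideanSpace.single i (1:ℝ)) i
        = N * k (‖x‖^2) := by
      simp [EuclideanSpace.single_apply, mul_comm]
    have hs2 : ∑ i : Fin N, (kd * (2 * x i)) * x i = 2 * kd * ‖x‖^2 := by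
      rw [← real_inner_self_eq_norm_sq]
      simp only [PiLp.inner_apply, RCLike.inner_apply, conj_trivial]
      rw [Finset.mul_sum]
      congr 1
      ext i
      ring
    rw [hs1, hs2]
  have hcont_s : ContinuousAt (fun s : ℝ => C - b * (‖x‖ * s ^ ((-1:ℝ)/L)) ^ q) t := by
    have h1 : ContinuousAt (fun s : ℝ => s ^ ((-1:ℝ)/L)) t :=
      Real.continuousAt_rpow_const _ _ (Or.inl ht.ne')
    have h2 : ContinuousAt (fun s : ℝ => ‖x‖ * s ^ ((-1:ℝ)/L)) t := continuousAt_const.mul h1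
    have h3 : ContinuousAt (fun s : ℝ => (‖x‖ * s ^ ((-1:ℝ)/L)) ^ q) t :=
      h2.rpow_const (Or.inr hq.le)
    exact continuousAt_const.sub (continuousAt_const.mul h3)
  have hev_t : (fun s : ℝ => s ^ (-(N:ℝ)/L) * (max (C - b * (‖x‖ * s ^ ((-1:ℝ)/L)) ^ q) 0) ^ m)
      =ᶠ[nhds t] (fun s : ℝ =>
        s ^ (-(N:ℝ)/L) * (C - b * ‖x‖ ^ q * s ^ ((-1:ℝ)/L * q)) ^ m) := by
    filter_upwards [eventually_gt_nhds ht, hcont_s.eventually (eventually_gt_nhds hpos)]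
      with s hs1 hs2
    rw [max_eq_left hs2.le]
    rw [Real.mul_rpow (norm_nonneg x) (Real.rpow_nonneg hs1.le _),
      ← Real.rpow_mul hs1.le, ← mul_assoc]
  have hWt : 0 < C - b * ‖x‖ ^ q * t ^ ((-1:ℝ)/L * q) := by
    have h := hpos
    rw [Real.mul_rpow (norm_nonneg x) (Real.rpow_nonneg ht.le _),
      ← Real.rpow_mul ht.le, ← mul_assoc] at h
    exact h
  have h1 : HasDerivAt (fun s : ℝ => s ^ (-(N:ℝ)/L)) (-(N:ℝ)/L * t ^ (-(N:ℝ)/L - 1)) t :=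
    Real.hasDerivAt_rpow_const (Or.inl ht.ne')
  have h2 : HasDerivAt (fun s : ℝ => s ^ ((-1:ℝ)/L * q))
      ((-1:ℝ)/L * q * t ^ ((-1:ℝ)/L * q - 1)) t :=
    Real.hasDerivAt_rpow_const (Or.inl ht.ne')
  have h3 : HasDerivAt (fun s : ℝ => C - b * ‖x‖ ^ q * s ^ ((-1:ℝ)/L * q))
      (-(b * ‖x‖ ^ q * ((-1:ℝ)/L * q * t ^ ((-1:ℝ)/L * q - 1)))) t :=
    (h2.const_mul (b * ‖x‖ ^ q)).const_sub C
  have h4 : HasDerivAt (fun s : ℝ => (C - b * ‖x‖ ^ q * s ^ ((-1:ℝ)/L * q)) ^ m)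
      ((-(b * ‖x‖ ^ q * ((-1:ℝ)/L * q * t ^ ((-1:ℝ)/L * q - 1)))) * m
        * (C - b * ‖x‖ ^ q * t ^ ((-1:ℝ)/L * q)) ^ (m-1)) t :=
    h3.rpow_const (Or.inl hWt.ne')
  have h5 := h1.mul h4
  have hder : deriv (fun s : ℝ =>
      s ^ (-(N:ℝ)/L) * (max (C - b * (‖x‖ * s ^ ((-1:ℝ)/L)) ^ q) 0) ^ m) t
      = (-(N:ℝ)/L * t ^ (-(N:ℝ)/L - 1)) * (C - b * ‖x‖ ^ q * t ^ ((-1:ℝ)/L * q)) ^ m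
        + t ^ (-(N:ℝ)/L) * ((-(b * ‖x‖ ^ q * ((-1:ℝ)/L * q * t ^ ((-1:ℝ)/L * q - 1)))) * m
          * (C - b * ‖x‖ ^ q * t ^ ((-1:ℝ)/L * q)) ^ (m-1)) := by
    rw [hev_t.deriv_eq]
    exact h5.deriv
  rw [hder, hdiv]
  have hT2 : T = t ^ ((-1:ℝ)/L * q) := by
    rw [hTdef, ← Real.rpow_mul ht.le]
  have hq1 : ((‖x‖^2 : ℝ)) ^ (q/2) = ‖x‖ ^ q := by
    rw [← Real.rpow_natCast ‖x‖ 2, ← Real.rpow_mul (norm_nonneg x)]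
    congr 1
    ring
  have f5 : ((‖x‖^2 : ℝ)) ^ (q/2-1) * ((‖x‖^2 : ℝ)) = ‖x‖ ^ q := by
    nth_rewrite 2 [← Real.rpow_one ((‖x‖^2 : ℝ))]
    rw [← Real.rpow_add hux]
    rw [show q/2 - 1 + 1 = q/2 by ring]
    exact hq1
  have g1 : t ^ (-(N:ℝ)/L) * t ^ ((-1:ℝ)/L * q - 1)
      = t ^ (-(N:ℝ)/L - 1) * t ^ ((-1:ℝ)/L * q) := by
    rw [← Real.rpow_add ht, ← Real.rpow_add ht]
    congr 1
    ring
  have hmbq : m * b * q = L ^ (-(1:ℝ)/(p-1)) := by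
    rw [hbdef, hmdef, hqdef]
    field_simp
  have f1 : A ^ (p-1) = t ^ (-(N:ℝ)/L - 1) * L⁻¹ := by
    have hA_eq : A = t ^ (-(N:ℝ)/L + (-1:ℝ)/L * q) * L ^ (-(1:ℝ)/(p-1)) := by
      rw [Real.rpow_add ht, ← hmbq]
      rw [hAdef, hT2]
      ring
    rw [hA_eq, Real.mul_rpow (Real.rpow_nonneg ht.le _) (Real.rpow_nonneg hL.le _),
      ← Real.rpow_mul ht.le, ← Real.rpow_mul hL.le]
    have e1 : (-(N:ℝ)/L + (-1:ℝ)/L * q) * (p-1) = -(N:ℝ)/L - 1 := by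
      rw [hqdef, hLdef]
      field_simp
      ring
    have e2 : (-(1:ℝ)/(p-1)) * (p-1) = -1 := by
      field_simp
    rw [e1, e2, Real.rpow_neg_one]
  simp only [hkdef, hkddef, hwdef]
  rw [hT2, hq1]
  rw [show C - b * (‖x‖ ^ q * t ^ ((-1:ℝ)/L * q)) = C - b * ‖x‖ ^ q * t ^ ((-1:ℝ)/L * q)
    by ring]
  rw [f1]
  linear_combination
    (m * b * ‖x‖ ^ q * q * L⁻¹
      * (C - b * ‖x‖ ^ q * t ^ ((-1:ℝ)/L * q)) ^ (m-1)) * g1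
    - (m * b * q * L⁻¹ * (C - b * ‖x‖ ^ q * t ^ ((-1:ℝ)/L * q)) ^ (m-1)
      * t ^ (-(N:ℝ)/L - 1) * t ^ ((-1:ℝ)/L * q)) * f5

end BarenblattAux

/-- Barenblatt solutions of the degenerate parabolic `p`-Laplace equation, `p > 2`:
there exist `a, b > 0` depending only on `N` and `p` such that for each mass `M > 0`
the Barenblatt profile solves `∂ₜ B = div(‖∇B‖^{p-2} ∇B)` pointwise inside its support
(away from `x = 0`), and `B(·, t) ⇀ M δ₀` as `t → 0⁺`. -/
theorem barenblatt_degenerate (N : ℕ) (hN : 1 ≤ N) (p : ℝ) (hp : 2 < p) :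
    ∃ a : ℝ, 0 < a ∧ ∃ b : ℝ, 0 < b ∧
      ∀ M : ℝ, 0 < M →
        -- (i) the equation holds pointwise inside the support, away from the origin
        (∀ (x : EuclideanSpace ℝ (Fin N)) (t : ℝ), 0 < t → x ≠ 0 →
          0 < a * M ^ (p * (p - 2) / (((N : ℝ) * (p - 2) + p) * (p - 1))) -
              b * (‖x‖ * t ^ ((-1 : ℝ) / ((N : ℝ) * (p - 2) + p))) ^ (p / (p - 1)) →
          DifferentiableAt ℝ (pFlux p (fun z => barenblattDeg N p a b M z t)) x ∧
            deriv (fun s => barenblattDeg N p a b M x s) t =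
              divergence (pFlux p (fun z => barenblattDeg N p a b M z t)) x) ∧
        -- (ii) the initial datum is `M δ₀` in the sense of measures
        (∀ φ : EuclideanSpace ℝ (Fin N) → ℝ, Continuous φ → (∃ K : ℝ, ∀ x, |φ x| ≤ K) →
          Tendsto (fun t => ∫ x, barenblattDeg N p a b M x t * φ x)
            (nhdsWithin 0 (Ioi (0 : ℝ))) (nhds (M * φ 0))) := by
  have hp0 : (0:ℝ) < p := by linarith
  have hp1 : (0:ℝ) < p - 1 := by linarith
  have hp2 : (0:ℝ) < p - 2 := by linarith
  have hL : (0:ℝ) < (N:ℝ)*(p-2)+p := by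
    have : (0:ℝ) ≤ (N:ℝ)*(p-2) := mul_nonneg (Nat.cast_nonneg N) hp2.le
    linarith
  have hq : (0:ℝ) < p/(p-1) := by positivity
  have hm : (0:ℝ) < (p-1)/(p-2) := by positivity
  have hκ : (0:ℝ) < p*(p-2)/((((N:ℝ)*(p-2)+p))*(p-1)) := by positivity
  set b : ℝ := (p-2)/p * ((N:ℝ)*(p-2)+p) ^ (-(1:ℝ)/(p-1)) with hbdef
  have hb : 0 < b := mul_pos (by positivity) (Real.rpow_pos_of_pos hL _)
  set J : ℝ := ∫ y : EuclideanSpace ℝ (Fin N),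
    (max (1 - b * ‖y‖ ^ (p/(p-1))) 0) ^ ((p-1)/(p-2)) with hJdef
  have hJ : 0 < J := J_pos b _ _ hb hq hm
  set a : ℝ := J ^ (-(p*(p-2)/((((N:ℝ)*(p-2)+p))*(p-1)))) with hadef
  have ha : 0 < a := Real.rpow_pos_of_pos hJ _
  refine ⟨a, ha, b, hb, ?_⟩
  intro M hM
  have hC : 0 < a * M ^ (p*(p-2)/((((N:ℝ)*(p-2)+p))*(p-1))) :=
    mul_pos ha (Real.rpow_pos_of_pos hM _)
  constructor
  · intro x t ht hx hpos
    have key := part_one N p ((N:ℝ)*(p-2)+p) (p/(p-1)) ((p-1)/(p-2)) b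
      (a * M ^ (p*(p-2)/((((N:ℝ)*(p-2)+p))*(p-1)))) hp rfl rfl rfl hbdef hC x t ht hx hpos
    simp only [barenblattDeg]
    exact key
  · intro φ hφ hKex
    obtain ⟨K, hK⟩ := hKex
    have hmass : ∫ y : EuclideanSpace ℝ (Fin N),
        (max ((a * M ^ (p*(p-2)/((((N:ℝ)*(p-2)+p))*(p-1)))) - b * ‖y‖ ^ (p/(p-1))) 0)
          ^ ((p-1)/(p-2)) = M := by
      rw [mass_scale _ b _ _ hC hb hq hm, ← hJdef]
      have hexp : (p-1)/(p-2) + (N:ℝ)/(p/(p-1))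
          = (p*(p-2)/((((N:ℝ)*(p-2)+p))*(p-1)))⁻¹ := by
        field_simp
        ring
      rw [hexp, Real.mul_rpow ha.le (Real.rpow_nonneg hM.le _)]
      have h1 : (M ^ (p*(p-2)/((((N:ℝ)*(p-2)+p))*(p-1))))
          ^ ((p*(p-2)/((((N:ℝ)*(p-2)+p))*(p-1)))⁻¹) = M := by
        rw [← Real.rpow_mul hM.le, mul_inv_cancel₀ hκ.ne', Real.rpow_one]
      have h2 : a ^ ((p*(p-2)/((((N:ℝ)*(p-2)+p))*(p-1)))⁻¹) = J⁻¹ := by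
        rw [hadef, ← Real.rpow_mul hJ.le,
          show (-(p*(p-2)/((((N:ℝ)*(p-2)+p))*(p-1))))
            * (p*(p-2)/((((N:ℝ)*(p-2)+p))*(p-1)))⁻¹ = -1 by
              field_simp,
          Real.rpow_neg_one]
      rw [h1, h2]
      field_simp
    have h2 := part_two N ((N:ℝ)*(p-2)+p) (p/(p-1)) ((p-1)/(p-2)) b
      (a * M ^ (p*(p-2)/((((N:ℝ)*(p-2)+p))*(p-1)))) M hL hq hm hb hC hmass φ hφ K hK
    simp only [barenblattDeg]
    exact h2
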